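/- arXiv:1210.1380 — 3 statements merged into one kernel-verified Lean document; each statement's English description precedes it below -/
import Mathlib

section
/- Let T be a bounded operator on a complex separable Hilbert space H and let (P_n) be a proper Følner sequence for T. Then for every compact operator K on H one has ‖K P_n − P_n K‖ → 0 in operator norm, and (P_n) is a proper Følner sequence for T + K. -/
/-!
Since `‖1 - Pₙ‖ ≤ 1` and `1 - Pₙ → 0` strongly, the operators `1 - Pₙ` are equicontinuous, so they
tend to `0` uniformly on the compact closure of the image of the unit ball under `K`; hence
`‖(1 - Pₙ) K‖ → 0`. The adjoint `K†` is the norm limit of the finite-rank operators `K† Pₙ`, so it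
is compact as well, and taking adjoints gives `‖K (1 - Pₙ)‖ → 0`; this controls `KPₙ - PₙK`.

For the Følner property write `KP - PK = (1 - P) K P - P K (1 - P)` and use the Hilbert–Schmidt
estimates `‖AP‖₂, ‖PA‖₂ ≤ ‖A‖ ‖P‖₂`, with `‖P‖₂² = rank P`: this gives
`φ(T + K, P)² ≤ 2 φ(T, P)² + 4 (‖(1 - P) K‖² + ‖K (1 - P)‖²)`.
-/

noncomputable section

open Filter Topology TopologicalSpace

/-- The Hilbert–Schmidt norm of an operator, computed via a Hilbert basis of the space
(the value is independent of the choice of basis; for a finite-rank orthogonal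
projection `P` it equals `√(rank P)`). -/
noncomputable def hsNorm {H : Type*} [NormedAddCommGroup H] [InnerProductSpace ℂ H]
    [CompleteSpace H] (A : H →L[ℂ] H) : ℝ :=
  Real.sqrt (∑' i : (exists_hilbertBasis ℂ H).choose, ‖A (i : H)‖ ^ 2)

variable {H : Type*} [NormedAddCommGroup H] [InnerProductSpace ℂ H] [CompleteSpace H]

/-- An orthogonal projection: a self-adjoint idempotent bounded operator. -/
def IsOrthProjection (P : H →L[ℂ] H) : Prop :=
  IsIdempotentElem P ∧ IsSelfAdjoint P

/-- A nonzero finite-rank orthogonal projection. -/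
def IsFinRankProj (P : H →L[ℂ] H) : Prop :=
  IsOrthProjection P ∧ P ≠ 0 ∧ FiniteDimensional ℂ (LinearMap.range (P : H →ₗ[ℂ] H))

/-- `φ(T,P) = ‖TP - PT‖₂ / ‖P‖₂`. -/
noncomputable def phi (T P : H →L[ℂ] H) : ℝ :=
  hsNorm (T * P - P * T) / hsNorm P

/-- A proper Følner sequence for `T`: an increasing sequence of nonzero finite-rank
orthogonal projections converging strongly to the identity with `φ(T,P_n) → 0`. -/
def IsProperFolnerSeq (T : H →L[ℂ] H) (P : ℕ → H →L[ℂ] H) : Prop :=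
  (∀ n, IsFinRankProj (P n)) ∧
  (∀ n, (P (n + 1) - P n).IsPositive) ∧
  (∀ x : H, Tendsto (fun n => P n x) atTop (nhds x)) ∧
  Tendsto (fun n => phi T (P n)) atTop (nhds 0)

/-- A strongly non-Følner operator: `φ(T,P) ≥ ε` for some `ε > 0` and every nonzero
finite-rank orthogonal projection `P`. -/
def StronglyNonFolner (T : H →L[ℂ] H) : Prop :=
  ∃ ε > (0 : ℝ), ∀ P : H →L[ℂ] H, IsFinRankProj P → ε ≤ phi T P

/-- The numerical range of an operator. -/
def numRange (A : H →L[ℂ] H) : Set ℂ :=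
  {z : ℂ | ∃ x : H, ‖x‖ = 1 ∧ (inner ℂ (A x) x : ℂ) = z}

/-- A finite operator in the sense of Williams: `0 ∈ closure W([T,X])` for every `X`. -/
def FiniteOperator (T : H →L[ℂ] H) : Prop :=
  ∀ X : H →L[ℂ] H, (0 : ℂ) ∈ closure (numRange (T * X - X * T))

/-- A finite block reducible operator: one having a nonzero finite-dimensional
reducing subspace. -/
def FiniteBlockReducible (T : H →L[ℂ] H) : Prop :=
  ∃ H₀ : Submodule ℂ H, H₀ ≠ ⊥ ∧ FiniteDimensional ℂ H₀ ∧
    (∀ x ∈ H₀, T x ∈ H₀) ∧ (∀ x ∈ H₀ᗮ, T x ∈ H₀ᗮ)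

section CompactOperator

variable {𝕜 E F G ι : Type*} [RCLike 𝕜] [NormedAddCommGroup E] [NormedSpace 𝕜 E]
  [NormedAddCommGroup F] [NormedSpace 𝕜 F] [NormedAddCommGroup G] [NormedSpace 𝕜 G]

theorem IsCompactOperator.tendsto_norm_comp_of_tendsto_apply {K : E →L[𝕜] F}
    (hK : IsCompactOperator K) {l : Filter ι} {A : ι → F →L[𝕜] G} (hbdd : ∃ C, ∀ i, ‖A i‖ ≤ C)
    (hA : ∀ y, Tendsto (fun i => A i y) l (𝓝 0)) :
    Tendsto (fun i => ‖(A i).comp K‖) l (𝓝 0) := by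
  set S := closure (K '' Metric.closedBall 0 1)
  have hS : IsCompact S := hK.isCompact_closure_image_closedBall 1
  have hequi : Equicontinuous fun i => (A i : F → G) :=
    ((NormedSpace.equicontinuous_TFAE A).out 5 1).mp hbdd
  have hunif : TendstoUniformlyOn (fun i => (A i : F → G)) 0 l S := by
    have h := (EquicontinuousOn.tendsto_uniformOnFun_iff_pi' (𝔖 := {S})
      (by simpa using hS) (by simpa using hequi.equicontinuousOn S) l 0).mpr ?_
    · exact UniformOnFun.tendsto_iff_tendstoUniformlyOn.mp h S rfl
    · exact tendsto_pi_nhds.mpr fun y => hA y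
  rw [Metric.tendsto_nhds]
  intro ε hε
  filter_upwards [Metric.tendstoUniformlyOn_iff.mp hunif (ε / 2) (half_pos hε)] with i hi
  have : ‖(A i).comp K‖ ≤ ε / 2 := by
    refine ContinuousLinearMap.opNorm_le_of_unit_norm (half_pos hε).le fun x hx => ?_
    have hx : K x ∈ S := subset_closure ⟨x, by simp [hx], rfl⟩
    simpa [dist_eq_norm'] using (hi _ hx).le
  rw [Real.dist_eq, sub_zero, abs_of_nonneg (norm_nonneg _)]
  linarith

theorem ContinuousLinearMap.isCompactOperator_of_finiteDimensional_range (f : E →L[𝕜] F)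
    [FiniteDimensional 𝕜 (LinearMap.range (f : E →ₗ[𝕜] F))] : IsCompactOperator f :=
  (isCompactOperator_of_locallyCompactSpace_dom
    (f.codRestrict _ (LinearMap.mem_range_self (f : E →ₗ[𝕜] F)))).continuous_comp
    continuous_subtype_val

end CompactOperator

section StrongApproximation

variable {𝕜 E : Type*} [RCLike 𝕜] [NormedAddCommGroup E] [InnerProductSpace 𝕜 E] [CompleteSpace E]
  {P : ℕ → E →L[𝕜] E} {K : E →L[𝕜] E}

theorem tendsto_norm_one_sub_mul_of_isCompactOperator (hP : ∀ n, IsStarProjection (P n))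
    (hPx : ∀ x, Tendsto (fun n => P n x) atTop (𝓝 x)) (hK : IsCompactOperator K) :
    Tendsto (fun n => ‖(1 - P n) * K‖) atTop (𝓝 0) :=
  hK.tendsto_norm_comp_of_tendsto_apply ⟨1, fun n => (hP n).one_sub.norm_le⟩ fun x => by
    simpa using (tendsto_const_nhds (x := x)).sub (hPx x)

theorem isCompactOperator_adjoint_of_tendsto_starProjection (hP : ∀ n, IsStarProjection (P n))
    (hfin : ∀ n, FiniteDimensional 𝕜 (LinearMap.range (P n : E →ₗ[𝕜] E)))
    (hPx : ∀ x, Tendsto (fun n => P n x) atTop (𝓝 x)) (hK : IsCompactOperator K) :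
    IsCompactOperator (ContinuousLinearMap.adjoint K) := by
  have hlim : Tendsto (fun n => ContinuousLinearMap.adjoint K * P n) atTop
      (𝓝 (ContinuousLinearMap.adjoint K)) := by
    rw [tendsto_iff_norm_sub_tendsto_zero]
    refine (tendsto_norm_one_sub_mul_of_isCompactOperator hP hPx hK).congr fun n => ?_
    rw [← norm_star, ← norm_neg]
    simp [sub_mul, ← ContinuousLinearMap.star_eq_adjoint, (hP n).isSelfAdjoint.star_eq]
  refine isClosed_setOfPred_isCompactOperator.mem_of_tendsto hlim (Eventually.of_forall fun n => ?_)
  have := hfin n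
  exact (P n).isCompactOperator_of_finiteDimensional_range.clm_comp (ContinuousLinearMap.adjoint K)

theorem tendsto_norm_mul_one_sub_of_isCompactOperator (hP : ∀ n, IsStarProjection (P n))
    (hfin : ∀ n, FiniteDimensional 𝕜 (LinearMap.range (P n : E →ₗ[𝕜] E)))
    (hPx : ∀ x, Tendsto (fun n => P n x) atTop (𝓝 x)) (hK : IsCompactOperator K) :
    Tendsto (fun n => ‖K * (1 - P n)‖) atTop (𝓝 0) := by
  refine (tendsto_norm_one_sub_mul_of_isCompactOperator hP hPx
    (isCompactOperator_adjoint_of_tendsto_starProjection hP hfin hPx hK)).congr fun n => ?_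
  rw [← norm_star, star_mul, ContinuousLinearMap.star_eq_adjoint,
    ContinuousLinearMap.adjoint_adjoint, (hP n).one_sub.isSelfAdjoint.star_eq]

end StrongApproximation

section HilbertSchmidt

theorem summable_sq_and_tsum_sq_le_of_le_add {ι : Type*} {f g h : ι → ℝ} (hh : ∀ i, 0 ≤ h i)
    (hfgh : ∀ i, h i ≤ f i + g i) (hf : Summable fun i => f i ^ 2)
    (hg : Summable fun i => g i ^ 2) :
    Summable (fun i => h i ^ 2) ∧ ∑' i, h i ^ 2 ≤ 2 * ∑' i, f i ^ 2 + 2 * ∑' i, g i ^ 2 := by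
  have hle : ∀ i, h i ^ 2 ≤ 2 * f i ^ 2 + 2 * g i ^ 2 := fun i => by
    nlinarith [hh i, hfgh i, sq_nonneg (f i - g i)]
  have hsum : Summable fun i => 2 * f i ^ 2 + 2 * g i ^ 2 := (hf.mul_left 2).add (hg.mul_left 2)
  have hhsum : Summable fun i => h i ^ 2 := .of_nonneg_of_le (fun i => sq_nonneg _) hle hsum
  refine ⟨hhsum, ?_⟩
  rw [← tsum_mul_left, ← tsum_mul_left, ← (hf.mul_left 2).tsum_add (hg.mul_left 2)]
  exact hhsum.tsum_le_tsum hle hsum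

variable {𝕜 E ι : Type*} [RCLike 𝕜] [NormedAddCommGroup E] [InnerProductSpace 𝕜 E]

theorem HilbertBasis.hasSum_norm_inner_sq (b : HilbertBasis ι 𝕜 E) (x : E) :
    HasSum (fun i => ‖inner 𝕜 (b i) x‖ ^ 2) (‖x‖ ^ 2) := by
  simpa [b.repr_apply_apply] using lp.hasSum_norm (p := 2) (by norm_num) (b.repr x)

theorem Submodule.norm_starProjection_sq_eq_sum (U : Submodule 𝕜 E) [FiniteDimensional 𝕜 U]
    (x : E) : ‖U.starProjection x‖ ^ 2 = ∑ k, ‖inner 𝕜 (stdOrthonormalBasis 𝕜 U k : E) x‖ ^ 2 := by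
  rw [← U.coe_orthogonalProjectionOnto_apply, Submodule.norm_coe,
    ← (stdOrthonormalBasis 𝕜 U).sum_sq_norm_inner_right]
  simp

variable [CompleteSpace E] (b : HilbertBasis ι 𝕜 E) (U : Submodule 𝕜 E) [FiniteDimensional 𝕜 U]

theorem hasSum_norm_starProjection_apply_sq (C : E →L[𝕜] E) :
    HasSum (fun i => ‖U.starProjection (C (b i))‖ ^ 2)
      (∑ k, ‖ContinuousLinearMap.adjoint C (stdOrthonormalBasis 𝕜 U k)‖ ^ 2) := by
  refine (hasSum_sum (f := fun k i => ‖inner 𝕜 (b i)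
    (ContinuousLinearMap.adjoint C (stdOrthonormalBasis 𝕜 U k))‖ ^ 2)
    fun k _ => b.hasSum_norm_inner_sq _).congr_fun fun i => ?_
  simp only [U.norm_starProjection_sq_eq_sum, ContinuousLinearMap.adjoint_inner_right,
    norm_inner_symm]

theorem summable_norm_starProjection_apply_sq (C : E →L[𝕜] E) :
    Summable (fun i => ‖U.starProjection (C (b i))‖ ^ 2) :=
  (hasSum_norm_starProjection_apply_sq b U C).summable

theorem tsum_norm_starProjection_apply_sq_le (C : E →L[𝕜] E) :
    ∑' i, ‖U.starProjection (C (b i))‖ ^ 2 ≤ Module.finrank 𝕜 U * ‖C‖ ^ 2 := by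
  rw [(hasSum_norm_starProjection_apply_sq b U C).tsum_eq]
  calc ∑ k, ‖ContinuousLinearMap.adjoint C (stdOrthonormalBasis 𝕜 U k)‖ ^ 2
      ≤ ∑ _k : Fin (Module.finrank 𝕜 U), ‖C‖ ^ 2 := by
        gcongr with k
        simpa [Submodule.norm_coe, (stdOrthonormalBasis 𝕜 U).norm_eq_one] using
          (ContinuousLinearMap.adjoint C).le_opNorm (stdOrthonormalBasis 𝕜 U k)
    _ = Module.finrank 𝕜 U * ‖C‖ ^ 2 := by simp

theorem hasSum_norm_starProjection_sq :
    HasSum (fun i => ‖U.starProjection (b i)‖ ^ 2) (Module.finrank 𝕜 U) := by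
  simpa [← ContinuousLinearMap.star_eq_adjoint, Submodule.norm_coe,
    (stdOrthonormalBasis 𝕜 U).norm_eq_one] using hasSum_norm_starProjection_apply_sq b U 1

theorem summable_norm_apply_starProjection_sq (A : E →L[𝕜] E) :
    Summable (fun i => ‖A (U.starProjection (b i))‖ ^ 2) :=
  .of_nonneg_of_le (fun _ => by positivity)
    (fun i => by rw [← mul_pow]; gcongr; exact A.le_opNorm _)
    ((hasSum_norm_starProjection_sq b U).summable.mul_left (‖A‖ ^ 2))

theorem tsum_norm_apply_starProjection_sq_le (A : E →L[𝕜] E) :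
    ∑' i, ‖A (U.starProjection (b i))‖ ^ 2 ≤ ‖A‖ ^ 2 * Module.finrank 𝕜 U := by
  rw [← (hasSum_norm_starProjection_sq b U).tsum_eq, ← tsum_mul_left]
  refine (summable_norm_apply_starProjection_sq b U A).tsum_le_tsum (fun i => ?_)
    ((hasSum_norm_starProjection_sq b U).summable.mul_left _)
  rw [← mul_pow]
  gcongr
  exact A.le_opNorm _

theorem summable_norm_commutator_starProjection_sq (A : E →L[𝕜] E) :
    Summable fun i => ‖(A * U.starProjection - U.starProjection * A) (b i)‖ ^ 2 :=
  (summable_sq_and_tsum_sq_le_of_le_add (fun _ => norm_nonneg _) (fun _ => norm_sub_le _ _)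
    (summable_norm_apply_starProjection_sq b U A)
    (summable_norm_starProjection_apply_sq b U A)).1

theorem tsum_norm_commutator_starProjection_sq_le (K : E →L[𝕜] E) :
    ∑' i, ‖(K * U.starProjection - U.starProjection * K) (b i)‖ ^ 2 ≤
      2 * Module.finrank 𝕜 U * (‖(1 - U.starProjection) * K‖ ^ 2 +
        ‖K * (1 - U.starProjection)‖ ^ 2) := by
  set P := U.starProjection
  have hsplit : K * P - P * K = (1 - P) * K * P - P * (K * (1 - P)) := by noncomm_ring
  have h := summable_sq_and_tsum_sq_le_of_le_add (h := fun i => ‖(K * P - P * K) (b i)‖)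
    (fun i => norm_nonneg _) (fun i => by rw [hsplit]; exact norm_sub_le _ _)
    (summable_norm_apply_starProjection_sq b U ((1 - P) * K))
    (summable_norm_starProjection_apply_sq b U (K * (1 - P)))
  have h1 := tsum_norm_apply_starProjection_sq_le b U ((1 - P) * K)
  have h2 := tsum_norm_starProjection_apply_sq_le b U (K * (1 - P))
  refine h.2.trans ?_
  linear_combination 2 * h1 + 2 * h2

theorem tsum_norm_commutator_add_starProjection_sq_le (T K : E →L[𝕜] E) :
    ∑' i, ‖((T + K) * U.starProjection - U.starProjection * (T + K)) (b i)‖ ^ 2 ≤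
      2 * ∑' i, ‖(T * U.starProjection - U.starProjection * T) (b i)‖ ^ 2 +
        4 * Module.finrank 𝕜 U * (‖(1 - U.starProjection) * K‖ ^ 2 +
          ‖K * (1 - U.starProjection)‖ ^ 2) := by
  set P := U.starProjection
  have hsplit : (T + K) * P - P * (T + K) = (T * P - P * T) + (K * P - P * K) := by noncomm_ring
  have h := summable_sq_and_tsum_sq_le_of_le_add
    (h := fun i => ‖((T + K) * P - P * (T + K)) (b i)‖)
    (fun i => norm_nonneg _) (fun i => by rw [hsplit]; exact norm_add_le _ _)
    (summable_norm_commutator_starProjection_sq b U T)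
    (summable_norm_commutator_starProjection_sq b U K)
  linarith [h.2, tsum_norm_commutator_starProjection_sq_le b U K]

end HilbertSchmidt

section Folner

variable {H : Type*} [NormedAddCommGroup H] [InnerProductSpace ℂ H] [CompleteSpace H]

def hsBasis : HilbertBasis (exists_hilbertBasis ℂ H).choose ℂ H :=
  (exists_hilbertBasis ℂ H).choose_spec.choose

theorem hsNorm_eq_sqrt_tsum (A : H →L[ℂ] H) : hsNorm A = √(∑' i, ‖A (hsBasis i)‖ ^ 2) := by
  simp only [hsNorm, hsBasis, (exists_hilbertBasis ℂ H).choose_spec.choose_spec]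

theorem phi_nonneg (T P : H →L[ℂ] H) : 0 ≤ phi T P :=
  div_nonneg (Real.sqrt_nonneg _) (Real.sqrt_nonneg _)

theorem phi_starProjection_sq (T : H →L[ℂ] H) (U : Submodule ℂ H) [FiniteDimensional ℂ U] :
    phi T U.starProjection ^ 2 =
      (∑' i, ‖(T * U.starProjection - U.starProjection * T) (hsBasis i)‖ ^ 2) /
        Module.finrank ℂ U := by
  rw [phi, hsNorm_eq_sqrt_tsum, hsNorm_eq_sqrt_tsum,
    (hasSum_norm_starProjection_sq hsBasis U).tsum_eq, div_pow,
    Real.sq_sqrt (tsum_nonneg fun _ => by positivity), Real.sq_sqrt (Nat.cast_nonneg _)]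

theorem phi_add_starProjection_sq_le (U : Submodule ℂ H) [FiniteDimensional ℂ U]
    (T K : H →L[ℂ] H) :
    phi (T + K) U.starProjection ^ 2 ≤ 2 * phi T U.starProjection ^ 2 +
      4 * (‖(1 - U.starProjection) * K‖ ^ 2 + ‖K * (1 - U.starProjection)‖ ^ 2) := by
  rw [phi_starProjection_sq, phi_starProjection_sq]
  rcases (Nat.cast_nonneg (Module.finrank ℂ U) : (0 : ℝ) ≤ _).eq_or_lt with hr | hr
  · rw [← hr, div_zero, div_zero]
    positivity
  · rw [div_le_iff₀ hr]
    calc _ ≤ _ := tsum_norm_commutator_add_starProjection_sq_le hsBasis U T K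
      _ = _ := by field_simp

theorem IsStarProjection.phi_add_sq_le {P : H →L[ℂ] H} (hP : IsStarProjection P)
    [FiniteDimensional ℂ (LinearMap.range (P : H →ₗ[ℂ] H))] (T K : H →L[ℂ] H) :
    phi (T + K) P ^ 2 ≤ 2 * phi T P ^ 2 + 4 * (‖(1 - P) * K‖ ^ 2 + ‖K * (1 - P)‖ ^ 2) := by
  obtain ⟨_, hPU⟩ := isStarProjection_iff_eq_starProjection_range.mp hP
  rw [hPU]
  exact phi_add_starProjection_sq_le _ T K

end Folner

theorem statement_0_general (T : H →L[ℂ] H) (P : ℕ → H →L[ℂ] H)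
    (hP : IsProperFolnerSeq T P) (K : H →L[ℂ] H) (hK : IsCompactOperator (⇑K)) :
    Tendsto (fun n => ‖K * P n - P n * K‖) atTop (nhds 0) ∧
    IsProperFolnerSeq (T + K) P := by
  obtain ⟨hfin, hmono, hPx, hphi⟩ := hP
  have hstar : ∀ n, IsStarProjection (P n) := fun n => ⟨(hfin n).1.1, (hfin n).1.2⟩
  have hrange : ∀ n, FiniteDimensional ℂ (LinearMap.range (P n : H →ₗ[ℂ] H)) :=
    fun n => (hfin n).2.2
  have hleft := tendsto_norm_one_sub_mul_of_isCompactOperator hstar hPx hK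
  have hright := tendsto_norm_mul_one_sub_of_isCompactOperator hstar hrange hPx hK
  have hcomm (n : ℕ) : ‖K * P n - P n * K‖ ≤ ‖(1 - P n) * K‖ + ‖K * (1 - P n)‖ := by
    rw [show K * P n - P n * K = (1 - P n) * K - K * (1 - P n) by noncomm_ring]
    exact norm_sub_le _ _
  refine ⟨squeeze_zero (fun _ => norm_nonneg _) hcomm (by simpa using hleft.add hright),
    hfin, hmono, hPx, ?_⟩
  have hbound : Tendsto (fun n => √(2 * phi T (P n) ^ 2 +
      4 * (‖(1 - P n) * K‖ ^ 2 + ‖K * (1 - P n)‖ ^ 2))) atTop (𝓝 0) := by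
    simpa using
      (((hphi.pow 2).const_mul 2).add (((hleft.pow 2).add (hright.pow 2)).const_mul 4)).sqrt
  refine squeeze_zero (fun n => phi_nonneg _ _) (fun n => ?_) hbound
  have := hrange n
  exact (le_abs_self _).trans (Real.abs_le_sqrt ((hstar n).phi_add_sq_le T K))

/-- If `(P_n)` is a proper Følner sequence for `T`, then for every compact operator `K`
one has `‖K P_n - P_n K‖ → 0` and `(P_n)` is a proper Følner sequence for `T + K`. -/
theorem statement_0 [SeparableSpace H] (T : H →L[ℂ] H) (P : ℕ → H →L[ℂ] H)
    (hP : IsProperFolnerSeq T P) (K : H →L[ℂ] H) (hK : IsCompactOperator (⇑K)) :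
    Tendsto (fun n => ‖K * P n - P n * K‖) atTop (nhds 0) ∧
    IsProperFolnerSeq (T + K) P :=
  statement_0_general T P hP K hK

end
end

section
/- Let s ∈ ℕ and let P_1, ..., P_s be nonzero finite-rank orthogonal projections on a complex separable Hilbert space H such that ‖P_j P_k‖ ≤ δ := 1/(3s³) for all indices j ≠ k. Then the ranges of the projections P_j are linearly independent subspaces (i.e., their sum is direct), and P_1 + ... + P_s ≥ (1/2)(P_1 ∨ ... ∨ P_s) in the sense of self-adjoint operators, where P_1 ∨ ... ∨ P_s denotes the orthogonal projection onto the (finite-dimensional, hence closed) subspace P_1H + ... + P_sH. -/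
noncomputable section

open Filter Topology TopologicalSpace

variable {H : Type*} [NormedAddCommGroup H] [InnerProductSpace ℂ H] [CompleteSpace H]

/-!
Write a vector of `P₁H + ⋯ + PₛH` as `y = ∑ fⱼ` with `fⱼ ∈ PⱼH`. Since `⟪fⱼ, fₖ⟫ = ⟪Pₖ Pⱼ fⱼ, fₖ⟫`,
the off-diagonal inner products are at most `δ ‖fⱼ‖ ‖fₖ‖`, which gives the Gershgorin-type bound
`(1 - δ (s - 1)) ∑ ‖fⱼ‖² ≤ ‖y‖²`, and hence independence. For `y = Q x` one also has
`‖y‖² = ∑ ⟪Pⱼ x, fⱼ⟫ ≤ (∑ ‖Pⱼ x‖²)^½ (∑ ‖fⱼ‖²)^½`, and the two estimates combine to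
`(1 - δ (s - 1)) ‖Q x‖² ≤ ∑ ‖Pⱼ x‖² = re ⟪(∑ Pⱼ) x, x⟫`.
-/

open scoped InnerProductSpace

namespace IsOrthProjection

variable {Q R : H →L[ℂ] H}

lemma apply_of_mem_range (hR : IsOrthProjection R) {f : H}
    (hf : f ∈ LinearMap.range (R : H →ₗ[ℂ] H)) : R f = f :=
  LinearMap.IsIdempotentElem.mem_range_iff
    (ContinuousLinearMap.IsIdempotentElem.toLinearMap hR.1) |>.mp hf

lemma re_inner_apply_self (hR : IsOrthProjection R) (x : H) :
    RCLike.re ⟪R x, x⟫_ℂ = ‖R x‖ ^ 2 := by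
  conv_lhs => rw [← hR.1]
  rw [mul_apply_eq_comp, ← ContinuousLinearMap.adjoint_inner_right,
    hR.2.adjoint_eq]
  exact inner_self_eq_norm_sq _

lemma inner_apply_left_of_mem_range (hR : IsOrthProjection R) (x : H) {f : H}
    (hf : f ∈ LinearMap.range (R : H →ₗ[ℂ] H)) : ⟪R x, f⟫_ℂ = ⟪x, f⟫_ℂ := by
  rw [← ContinuousLinearMap.adjoint_inner_right, hR.2.adjoint_eq, hR.apply_of_mem_range hf]

lemma mul_eq_left_of_range_le (hR : IsOrthProjection R) (hQ : IsOrthProjection Q)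
    (h : LinearMap.range (R : H →ₗ[ℂ] H) ≤ LinearMap.range (Q : H →ₗ[ℂ] H)) : R * Q = R := by
  have hQR : Q * R = R := by
    ext x
    exact hQ.apply_of_mem_range (h ⟨x, rfl⟩)
  simpa only [star_mul, hR.2.star_eq, hQ.2.star_eq] using congrArg star hQR

lemma norm_apply_le_of_mem_range (hR : IsOrthProjection R) {f : H}
    (hf : f ∈ LinearMap.range (R : H →ₗ[ℂ] H)) : ‖Q f‖ ≤ ‖Q * R‖ * ‖f‖ := by
  simpa only [mul_apply_eq_comp, hR.apply_of_mem_range hf] using (Q * R).le_opNorm f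

lemma norm_inner_le_of_mem_range (hQ : IsOrthProjection Q) (hR : IsOrthProjection R) {f g : H}
    (hf : f ∈ LinearMap.range (R : H →ₗ[ℂ] H)) (hg : g ∈ LinearMap.range (Q : H →ₗ[ℂ] H)) :
    ‖⟪f, g⟫_ℂ‖ ≤ ‖Q * R‖ * ‖f‖ * ‖g‖ := by
  rw [← hQ.inner_apply_left_of_mem_range f hg]
  exact (norm_inner_le_norm _ _).trans
    (mul_le_mul_of_nonneg_right (hR.norm_apply_le_of_mem_range hf) (norm_nonneg g))

end IsOrthProjection

theorem re_inner_sum_le_of_mem_range {ι : Type*} [Fintype ι] {P : ι → H →L[ℂ] H}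
    (hP : ∀ j, IsOrthProjection (P j)) {f : ι → H}
    (hf : ∀ j, f j ∈ LinearMap.range (P j : H →ₗ[ℂ] H)) (y : H) :
    RCLike.re ⟪y, ∑ j, f j⟫_ℂ ≤ ∑ j, ‖P j y‖ * ‖f j‖ := by
  rw [inner_sum, map_sum]
  refine Finset.sum_le_sum fun j _ => ?_
  rw [← (hP j).inner_apply_left_of_mem_range y (hf j)]
  exact (RCLike.re_le_norm _).trans (norm_inner_le_norm _ _)

structure IsAlmostOrthogonal {ι : Type*} (δ : ℝ) (P : ι → H →L[ℂ] H) : Prop where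
  isOrthProjection : ∀ j, IsOrthProjection (P j)
  norm_mul_le : ∀ j k, j ≠ k → ‖P j * P k‖ ≤ δ

namespace IsAlmostOrthogonal

variable {ι : Type*} [Fintype ι] {P : ι → H →L[ℂ] H} {δ : ℝ}

theorem one_sub_mul_sum_norm_sq_le (hP : IsAlmostOrthogonal δ P) (hδ : 0 ≤ δ) {f : ι → H}
    (hf : ∀ j, f j ∈ LinearMap.range (P j : H →ₗ[ℂ] H)) :
    (1 - δ * (Fintype.card ι - 1)) * ∑ j, ‖f j‖ ^ 2 ≤ ‖∑ j, f j‖ ^ 2 := by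
  classical
  -- exact on the diagonal; off the diagonal this is `|⟪f j, f k⟫| ≤ δ ‖f j‖ ‖f k‖`
  have hterm : ∀ j k, (if j = k then (1 + δ) * ‖f j‖ ^ 2 else 0) - δ * (‖f j‖ * ‖f k‖)
      ≤ RCLike.re ⟪f j, f k⟫_ℂ := by
    intro j k
    split_ifs with hjk
    · subst hjk
      rw [inner_self_eq_norm_sq]
      linarith
    · have h := (hP.isOrthProjection k).norm_inner_le_of_mem_range (hP.isOrthProjection j)
        (hf j) (hf k)
      have hre := neg_le_of_abs_le ((RCLike.abs_re_le_norm _).trans h)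
      nlinarith [hP.norm_mul_le k j (Ne.symm hjk),
        mul_nonneg (norm_nonneg (f j)) (norm_nonneg (f k))]
  have hsum_sq : (∑ j, ‖f j‖) ^ 2 ≤ Fintype.card ι * ∑ j, ‖f j‖ ^ 2 := by
    simpa using sq_sum_le_card_mul_sum_sq (s := Finset.univ) (f := fun j => ‖f j‖)
  have hnorm : ‖∑ j, f j‖ ^ 2 = ∑ j, ∑ k, RCLike.re ⟪f j, f k⟫_ℂ := by
    rw [← inner_self_eq_norm_sq (𝕜 := ℂ), sum_inner]
    simp only [inner_sum, map_sum]
  have hlower : ∑ j, ∑ k, ((if j = k then (1 + δ) * ‖f j‖ ^ 2 else 0) - δ * (‖f j‖ * ‖f k‖))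
      = (1 + δ) * ∑ j, ‖f j‖ ^ 2 - δ * (∑ j, ‖f j‖) ^ 2 := by
    simp only [Finset.sum_sub_distrib, Finset.sum_ite_eq, Finset.mem_univ, if_true,
      ← Finset.mul_sum, sq, Finset.sum_mul_sum]
  rw [hnorm]
  have := Finset.sum_le_sum fun j (_ : j ∈ Finset.univ) =>
    Finset.sum_le_sum fun k (_ : k ∈ Finset.univ) => hterm j k
  nlinarith [Finset.sum_nonneg fun j (_ : j ∈ Finset.univ) => sq_nonneg ‖f j‖]

theorem eq_zero_of_sum_eq_zero (hP : IsAlmostOrthogonal δ P) (hδ : 0 ≤ δ)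
    (hδι : δ * (Fintype.card ι - 1) < 1)
    {f : ι → H} (hf : ∀ j, f j ∈ LinearMap.range (P j : H →ₗ[ℂ] H)) (hsum : ∑ j, f j = 0)
    (j : ι) : f j = 0 := by
  have h := hP.one_sub_mul_sum_norm_sq_le hδ hf
  rw [hsum, norm_zero, zero_pow two_ne_zero] at h
  have hN : ∑ j, ‖f j‖ ^ 2 = 0 :=
    le_antisymm (nonpos_of_mul_nonpos_right h (by linarith))
      (Finset.sum_nonneg fun j _ => sq_nonneg _)
  simpa using
    (Finset.sum_eq_zero_iff_of_nonneg fun j _ => sq_nonneg ‖f j‖).mp hN j (Finset.mem_univ j)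

theorem mul_norm_sq_le_sum_norm_sq (hP : IsAlmostOrthogonal δ P) (hδ : 0 ≤ δ) {Q : H →L[ℂ] H}
    (hQ : IsOrthProjection Q)
    (hrange : LinearMap.range (Q : H →ₗ[ℂ] H) = ⨆ j, LinearMap.range (P j : H →ₗ[ℂ] H))
    {c : ℝ} (hc : c ≤ 1 - δ * (Fintype.card ι - 1)) (x : H) :
    c * ‖Q x‖ ^ 2 ≤ ∑ j, ‖P j x‖ ^ 2 := by
  obtain ⟨F, hF, hFsum⟩ := (Submodule.mem_iSup_iff_exists_finsupp _ (Q x)).mp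
    (hrange ▸ LinearMap.mem_range_self (Q : H →ₗ[ℂ] H) x)
  set f : ι → H := fun j => F j
  have hf : ∀ j, f j ∈ LinearMap.range (P j : H →ₗ[ℂ] H) := hF
  have hsum : ∑ j, f j = Q x := by rw [← hFsum, Finsupp.sum_fintype _ _ fun _ => rfl]
  have hPQ : ∀ j, P j (Q x) = P j x := fun j => by
    rw [← mul_apply_eq_comp, (hP.isOrthProjection j).mul_eq_left_of_range_le hQ
      (hrange ▸ le_iSup (fun j => LinearMap.range (P j : H →ₗ[ℂ] H)) j)]
  have hdecomp : ‖Q x‖ ^ 2 ≤ ∑ j, ‖P j x‖ * ‖f j‖ := by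
    simpa only [hsum, inner_self_eq_norm_sq, hPQ] using
      re_inner_sum_le_of_mem_range hP.isOrthProjection hf (Q x)
  have hCS := Finset.sum_mul_sq_le_sq_mul_sq Finset.univ (fun j => ‖P j x‖) (fun j => ‖f j‖)
  have horth := hP.one_sub_mul_sum_norm_sq_le hδ hf
  rw [hsum] at horth
  set N := ∑ j, ‖f j‖ ^ 2
  set B := ∑ j, ‖P j x‖ ^ 2
  have hN : 0 ≤ N := Finset.sum_nonneg fun j _ => sq_nonneg _
  have hB : 0 ≤ B := Finset.sum_nonneg fun j _ => sq_nonneg _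
  have h4 : (‖Q x‖ ^ 2) ^ 2 ≤ B * N :=
    (pow_le_pow_left₀ (sq_nonneg _) hdecomp 2).trans hCS
  rcases le_or_gt c 0 with hc0 | hc0
  · nlinarith
  rcases (sq_nonneg ‖Q x‖).eq_or_lt with hx | hx
  · rw [← hx]; linarith
  · nlinarith [mul_le_mul_of_nonneg_left hc hN]

theorem isPositive_sum_sub_smul (hP : IsAlmostOrthogonal δ P) (hδ : 0 ≤ δ) {Q : H →L[ℂ] H}
    (hQ : IsOrthProjection Q)
    (hrange : LinearMap.range (Q : H →ₗ[ℂ] H) = ⨆ j, LinearMap.range (P j : H →ₗ[ℂ] H))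
    {c : ℝ} (hc : c ≤ 1 - δ * (Fintype.card ι - 1)) :
    ((∑ j, P j) - (c : ℂ) • Q).IsPositive := by
  refine ContinuousLinearMap.isPositive_def'.mpr ⟨?_, fun x => ?_⟩
  · exact (isSelfAdjoint_sum _ fun j _ => (hP.isOrthProjection j).2).sub
      (IsSelfAdjoint.smul (Complex.conj_ofReal c) hQ.2)
  · rw [ContinuousLinearMap.reApplyInnerSelf_apply, sub_apply, sum_apply, smul_apply,
      inner_sub_left, sum_inner, inner_smul_left, map_sub, map_sum, Complex.conj_ofReal,
      RCLike.re_to_complex, Complex.re_ofReal_mul, ← RCLike.re_to_complex]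
    simp only [(hP.isOrthProjection _).re_inner_apply_self, hQ.re_inner_apply_self, sub_nonneg]
    exact hP.mul_norm_sq_le_sum_norm_sq hδ hQ hrange hc x

end IsAlmostOrthogonal

theorem statement_6_general (s : ℕ) (P : Fin s → H →L[ℂ] H)
    (hP : ∀ j, IsFinRankProj (P j))
    (hsmall : ∀ j k, j ≠ k → ‖P j * P k‖ ≤ 1 / (3 * (s : ℝ) ^ 3)) :
    ((∀ f : Fin s → H, (∀ j, f j ∈ LinearMap.range (P j : H →ₗ[ℂ] H)) →
        ∑ j, f j = 0 → ∀ j, f j = 0) ∧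
      (∀ Q : H →L[ℂ] H, IsOrthProjection Q →
        LinearMap.range (Q : H →ₗ[ℂ] H) = (⨆ j, LinearMap.range (P j : H →ₗ[ℂ] H)) →
        ((∑ j, P j) - ((1 : ℂ) / 2) • Q).IsPositive)) := by
  have hP' : IsAlmostOrthogonal (1 / (3 * (s : ℝ) ^ 3)) P := ⟨fun j => (hP j).1, hsmall⟩
  have hδ : 0 ≤ 1 / (3 * (s : ℝ) ^ 3) := by positivity
  have hδs : 1 / (3 * (s : ℝ) ^ 3) * (Fintype.card (Fin s) - 1) ≤ 1 / 2 := by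
    rw [Fintype.card_fin]
    rcases Nat.eq_zero_or_pos s with rfl | hs
    · norm_num
    · have : (1 : ℝ) ≤ s := by exact_mod_cast hs
      rw [div_mul_eq_mul_div, one_mul, div_le_div_iff₀ (by positivity) (by norm_num)]
      linarith [le_self_pow₀ this (by norm_num : 3 ≠ 0)]
  refine ⟨fun f hf hsum => hP'.eq_zero_of_sum_eq_zero hδ (by linarith) hf hsum,
    fun Q hQ hrange => ?_⟩
  simpa using hP'.isPositive_sum_sub_smul hδ hQ hrange (c := 1 / 2) (by linarith)

/-- If `P_1, …, P_s` are nonzero finite-rank orthogonal projections with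
`‖P_j P_k‖ ≤ 1/(3s³)` for `j ≠ k`, then their ranges are linearly independent and
`P_1 + ⋯ + P_s ≥ (1/2)(P_1 ∨ ⋯ ∨ P_s)`. -/
theorem statement_6 [SeparableSpace H] (s : ℕ) (P : Fin s → H →L[ℂ] H)
    (hP : ∀ j, IsFinRankProj (P j))
    (hsmall : ∀ j k, j ≠ k → ‖P j * P k‖ ≤ 1 / (3 * (s : ℝ) ^ 3)) :
    ((∀ f : Fin s → H, (∀ j, f j ∈ LinearMap.range (P j : H →ₗ[ℂ] H)) →
        ∑ j, f j = 0 → ∀ j, f j = 0) ∧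
      (∀ Q : H →L[ℂ] H, IsOrthProjection Q →
        LinearMap.range (Q : H →ₗ[ℂ] H) = (⨆ j, LinearMap.range (P j : H →ₗ[ℂ] H)) →
        ((∑ j, P j) - ((1 : ℂ) / 2) • Q).IsPositive)) :=
  statement_6_general s P hP hsmall
end
end

section
/- Let P and Q be nonzero finite-rank orthogonal projections on a complex separable Hilbert space H and let L ∈ L(H). Then |φ(L,P) − φ(L,Q)| ≤ 4‖L‖ · ‖P − Q‖₂ / max(‖P‖₂, ‖Q‖₂). -/
noncomputable section

open Filter Topology TopologicalSpace

variable {H : Type*} [NormedAddCommGroup H] [InnerProductSpace ℂ H] [CompleteSpace H]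

/-! Parseval turns `‖A‖₂²` into `∑ₖ ‖A* eₖ‖²` for any orthonormal basis `(eₖ)` of a
finite-dimensional subspace containing the range of `A`, so on such operators `‖·‖₂` is the
Euclidean norm of the finite vector `(A* eₖ)ₖ`. This gives the triangle inequality and
`‖AL‖₂, ‖LA‖₂ ≤ ‖L‖ ‖A‖₂`, hence `‖[L,A]‖₂ ≤ 2‖L‖ ‖A‖₂`. With `p = ‖P‖₂ ≥ q = ‖Q‖₂`,
`φ(L,P) - φ(L,Q) = (‖[L,P]‖₂ - ‖[L,Q]‖₂)/p - ‖[L,Q]‖₂ (p - q)/(pq)`,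
and each term is at most `2‖L‖ ‖P - Q‖₂ / p`. -/

open ContinuousLinearMap

theorem HilbertBasis.hasSum_sq_norm_inner {ι 𝕜 E : Type*} [RCLike 𝕜] [NormedAddCommGroup E]
    [InnerProductSpace 𝕜 E] (b : HilbertBasis ι 𝕜 E) (x : E) :
    HasSum (fun i => ‖inner 𝕜 (b i) x‖ ^ 2) (‖x‖ ^ 2) := by
  simpa [b.repr_apply_apply] using lp.hasSum_norm (p := 2) (by norm_num) (b.repr x)

theorem hsNorm_neg (A : H →L[ℂ] H) : hsNorm (-A) = hsNorm A := by
  simp [hsNorm]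

section FiniteRank

variable {κ : Type*} [Fintype κ] {V : Submodule ℂ H} {A B : H →L[ℂ] H}

theorem hasSum_sq_norm_apply_of_range_le {ι : Type*} (b : HilbertBasis ι ℂ H)
    (e : OrthonormalBasis κ ℂ V) (hA : ∀ x, A x ∈ V) :
    HasSum (fun i => ‖A (b i)‖ ^ 2) (∑ k, ‖adjoint A (e k)‖ ^ 2) := by
  have parseval (i : ι) : ‖A (b i)‖ ^ 2 = ∑ k, ‖inner ℂ (b i) (adjoint A (e k))‖ ^ 2 := by
    have h := e.sum_sq_norm_inner_right ⟨_, hA (b i)⟩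
    simp only [Submodule.coe_norm, Submodule.coe_inner] at h
    rw [← h]
    exact Finset.sum_congr rfl fun k _ => by rw [adjoint_inner_right, norm_inner_symm]
  simp_rw [parseval]
  exact hasSum_sum fun k _ => b.hasSum_sq_norm_inner _

def adjointCoords (e : OrthonormalBasis κ ℂ V) (A : H →L[ℂ] H) : PiLp 2 (fun _ : κ => H) :=
  WithLp.toLp 2 fun k => adjoint A (e k)

theorem adjointCoords_sub (e : OrthonormalBasis κ ℂ V) (A B : H →L[ℂ] H) :
    adjointCoords e (A - B) = adjointCoords e A - adjointCoords e B := by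
  ext k
  simp [adjointCoords]

theorem hsNorm_eq_norm_adjointCoords (e : OrthonormalBasis κ ℂ V) (hA : ∀ x, A x ∈ V) :
    hsNorm A = ‖adjointCoords e A‖ := by
  obtain ⟨b, hb⟩ := (exists_hilbertBasis ℂ H).choose_spec
  have h := hasSum_sq_norm_apply_of_range_le b e hA
  rw [hb] at h
  rw [hsNorm, adjointCoords, PiLp.norm_eq_of_L2, h.tsum_eq]

variable [FiniteDimensional ℂ V]

theorem hsNorm_sub_le (hA : ∀ x, A x ∈ V) (hB : ∀ x, B x ∈ V) :
    hsNorm (A - B) ≤ hsNorm A + hsNorm B := by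
  let e := stdOrthonormalBasis ℂ V
  rw [hsNorm_eq_norm_adjointCoords e hA, hsNorm_eq_norm_adjointCoords e hB,
    hsNorm_eq_norm_adjointCoords e fun x => sub_mem (hA x) (hB x), adjointCoords_sub]
  exact norm_sub_le _ _

theorem abs_hsNorm_sub_hsNorm_le (hA : ∀ x, A x ∈ V) (hB : ∀ x, B x ∈ V) :
    |hsNorm A - hsNorm B| ≤ hsNorm (A - B) := by
  let e := stdOrthonormalBasis ℂ V
  rw [hsNorm_eq_norm_adjointCoords e hA, hsNorm_eq_norm_adjointCoords e hB,
    hsNorm_eq_norm_adjointCoords e fun x => sub_mem (hA x) (hB x), adjointCoords_sub]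
  exact abs_norm_sub_norm_le _ _

theorem hsNorm_mul_le_opNorm_mul_hsNorm (L : H →L[ℂ] H) (hA : ∀ x, A x ∈ V) :
    hsNorm (L * A) ≤ ‖L‖ * hsNorm A := by
  obtain ⟨b, hb⟩ := (exists_hilbertBasis ℂ H).choose_spec
  have hsum := (hasSum_sq_norm_apply_of_range_le b (stdOrthonormalBasis ℂ V) hA).summable
  rw [hb] at hsum
  have hle (i : (exists_hilbertBasis ℂ H).choose) : ‖(L * A) i‖ ^ 2 ≤ ‖L‖ ^ 2 * ‖A i‖ ^ 2 := by
    rw [← mul_pow]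
    gcongr
    exact L.le_opNorm _
  rw [hsNorm, hsNorm, ← Real.sqrt_sq (norm_nonneg L), ← Real.sqrt_mul (sq_nonneg _),
    ← tsum_mul_left]
  have hsum' := hsum.mul_left (‖L‖ ^ 2)
  exact Real.sqrt_le_sqrt <|
    Summable.tsum_le_tsum hle (.of_nonneg_of_le (fun _ => by positivity) hle hsum') hsum'

theorem hsNorm_mul_le_hsNorm_mul_opNorm (hA : ∀ x, A x ∈ V) (L : H →L[ℂ] H) :
    hsNorm (A * L) ≤ hsNorm A * ‖L‖ := by
  let e := stdOrthonormalBasis ℂ V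
  rw [hsNorm_eq_norm_adjointCoords e hA, hsNorm_eq_norm_adjointCoords e fun x => hA (L x)]
  rw [← sq_le_sq₀ (norm_nonneg _) (by positivity), mul_pow, PiLp.norm_sq_eq_of_L2,
    PiLp.norm_sq_eq_of_L2, Finset.sum_mul]
  gcongr with k
  have hadj : adjoint (A * L) = adjoint L * adjoint A := by
    simp only [← star_eq_adjoint, star_mul]
  rw [adjointCoords, adjointCoords, hadj, ← adjoint.norm_map L, ← mul_pow]
  gcongr
  rw [mul_comm]
  exact (adjoint L).le_opNorm _

theorem hsNorm_commutator_le (L : H →L[ℂ] H) (hA : ∀ x, A x ∈ V) :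
    hsNorm (L * A - A * L) ≤ 2 * ‖L‖ * hsNorm A :=
  calc hsNorm (L * A - A * L) ≤ hsNorm (L * A) + hsNorm (A * L) :=
        hsNorm_sub_le (V := V ⊔ V.map (L : H →ₗ[ℂ] H))
          (fun x => Submodule.mem_sup_right (Submodule.mem_map_of_mem (hA x)))
          (fun x => Submodule.mem_sup_left (hA (L x)))
    _ ≤ ‖L‖ * hsNorm A + hsNorm A * ‖L‖ :=
        add_le_add (hsNorm_mul_le_opNorm_mul_hsNorm L hA) (hsNorm_mul_le_hsNorm_mul_opNorm hA L)
    _ = 2 * ‖L‖ * hsNorm A := by ring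

theorem abs_hsNorm_commutator_sub_le (L : H →L[ℂ] H) (hA : ∀ x, A x ∈ V) (hB : ∀ x, B x ∈ V) :
    |hsNorm (L * A - A * L) - hsNorm (L * B - B * L)| ≤ 2 * ‖L‖ * hsNorm (A - B) := by
  have hmem {C : H →L[ℂ] H} (hC : ∀ x, C x ∈ V) (x : H) :
      (L * C - C * L) x ∈ V ⊔ V.map (L : H →ₗ[ℂ] H) :=
    sub_mem (Submodule.mem_sup_right (Submodule.mem_map_of_mem (hC x)))
      (Submodule.mem_sup_left (hC (L x)))
  calc _ ≤ hsNorm ((L * A - A * L) - (L * B - B * L)) :=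
        abs_hsNorm_sub_hsNorm_le (hmem hA) (hmem hB)
    _ = hsNorm (L * (A - B) - (A - B) * L) := by congr 1; noncomm_ring
    _ ≤ 2 * ‖L‖ * hsNorm (A - B) := hsNorm_commutator_le L fun x => sub_mem (hA x) (hB x)

end FiniteRank

theorem IsOrthProjection.hsNorm_eq_sqrt_finrank {P : H →L[ℂ] H} (hP : IsOrthProjection P)
    [FiniteDimensional ℂ (LinearMap.range (P : H →ₗ[ℂ] H))] :
    hsNorm P = √(Module.finrank ℂ (LinearMap.range (P : H →ₗ[ℂ] H))) := by
  let e := stdOrthonormalBasis ℂ (LinearMap.range (P : H →ₗ[ℂ] H))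
  have hunit (k) : ‖adjointCoords e P k‖ = 1 := by
    obtain ⟨y, hy⟩ := (e k).2
    have hfix : P (e k) = e k := by
      rw [← hy]
      exact DFunLike.congr_fun hP.1 y
    rw [adjointCoords, isSelfAdjoint_iff'.mp hP.2]
    exact (congrArg norm hfix).trans (e.orthonormal.1 k)
  rw [hsNorm_eq_norm_adjointCoords e (LinearMap.mem_range_self _), PiLp.norm_eq_of_L2]
  simp [hunit]

theorem IsFinRankProj.hsNorm_pos {P : H →L[ℂ] H} (hP : IsFinRankProj P) : 0 < hsNorm P := by
  obtain ⟨hPorth, hP0, hfin⟩ := hP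
  rw [hPorth.hsNorm_eq_sqrt_finrank, Real.sqrt_pos, Nat.cast_pos]
  refine Nat.pos_of_ne_zero fun h => hP0 ?_
  exact coe_inj.mp <| (LinearMap.range_eq_bot.mp (Submodule.finrank_eq_zero.mp h)).trans
    toLinearMap_zero.symm

theorem abs_div_sub_div_le {a b c d p q : ℝ} (hq : 0 < q) (hqp : q ≤ p) (hab : |a - b| ≤ c * d)
    (hb₀ : 0 ≤ b) (hb : b ≤ c * q) (hpq : p - q ≤ d) :
    |a / p - b / q| ≤ 2 * c * d / p := by
  have hp : 0 < p := hq.trans_le hqp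
  have hsplit : a / p - b / q = (a - b) / p - b * (p - q) / (p * q) := by
    field_simp
    ring
  have hcorr : b * (p - q) / (p * q) ≤ c * d / p := by
    rw [div_le_div_iff₀ (by positivity) hp]
    have : b * (p - q) ≤ c * q * d := mul_le_mul hb hpq (by linarith) (by linarith)
    nlinarith
  calc |a / p - b / q| ≤ |a - b| / p + b * (p - q) / (p * q) := by
        rw [hsplit]
        refine (abs_sub _ _).trans_eq ?_
        rw [abs_div, abs_of_pos hp,
          abs_of_nonneg (div_nonneg (mul_nonneg hb₀ (sub_nonneg.2 hqp)) (by positivity))]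
    _ ≤ c * d / p + c * d / p := by gcongr
    _ = 2 * c * d / p := by ring

theorem abs_phi_sub_phi_le_of_hsNorm_le {L P Q : H →L[ℂ] H} (hP : IsFinRankProj P)
    (hQ : IsFinRankProj Q) (hQP : hsNorm Q ≤ hsNorm P) :
    |phi L P - phi L Q| ≤ 4 * ‖L‖ * hsNorm (P - Q) / hsNorm P := by
  have := hP.2.2
  have := hQ.2.2
  let W := LinearMap.range (P : H →ₗ[ℂ] H) ⊔ LinearMap.range (Q : H →ₗ[ℂ] H)
  have hPW (x : H) : P x ∈ W := Submodule.mem_sup_left (LinearMap.mem_range_self _ x)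
  have hQW (x : H) : Q x ∈ W := Submodule.mem_sup_right (LinearMap.mem_range_self _ x)
  have key := abs_div_sub_div_le hQ.hsNorm_pos hQP (abs_hsNorm_commutator_sub_le L hPW hQW)
    (Real.sqrt_nonneg _) (hsNorm_commutator_le L hQW)
    ((le_abs_self _).trans (abs_hsNorm_sub_hsNorm_le hPW hQW))
  rw [phi, phi]
  convert key using 2
  ring

theorem statement_7_general (P Q : H →L[ℂ] H)
    (hP : IsFinRankProj P) (hQ : IsFinRankProj Q) (L : H →L[ℂ] H) :
    |phi L P - phi L Q| ≤ 4 * ‖L‖ * hsNorm (P - Q) / max (hsNorm P) (hsNorm Q) := by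
  rcases le_total (hsNorm Q) (hsNorm P) with h | h
  · rw [max_eq_left h]
    exact abs_phi_sub_phi_le_of_hsNorm_le hP hQ h
  · rw [max_eq_right h, abs_sub_comm, ← hsNorm_neg, neg_sub]
    exact abs_phi_sub_phi_le_of_hsNorm_le hQ hP h

/-- `|φ(L,P) - φ(L,Q)| ≤ 4‖L‖ ‖P - Q‖₂ / max(‖P‖₂, ‖Q‖₂)`. -/
theorem statement_7 [SeparableSpace H] (P Q : H →L[ℂ] H)
    (hP : IsFinRankProj P) (hQ : IsFinRankProj Q) (L : H →L[ℂ] H) :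
    |phi L P - phi L Q| ≤ 4 * ‖L‖ * hsNorm (P - Q) / max (hsNorm P) (hsNorm Q) :=
  statement_7_general P Q hP hQ L

end
end
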